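/- arXiv:2104.08753 — 7 statements merged into one kernel-verified Lean document; each statement's English description precedes it below -/
import Mathlib

section
/- Let ρ and σ be density matrices of the same size and λ ∈ ℝ such that ρ ≼ 2^λ · σ in the Loewner order. Then the fidelity satisfies F(ρ,σ) ≥ 2^{−λ/2}, and consequently the purified distance satisfies P(ρ,σ) ≤ √(1 − 2^{−λ}). -/
open Matrix
open scoped ComplexOrder Classical

/-- A density matrix: a positive semidefinite matrix of trace 1. -/
def IsDensityMatrix {n : Type*} [Fintype n] (ρ : Matrix n n ℂ) : Prop :=
  ρ.PosSemidef ∧ ρ.trace = 1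

/-- The positive semidefinite square root of a matrix (junk value `0` if the matrix is
not positive semidefinite). -/
noncomputable def psdSqrt {n : Type*} [Fintype n] [DecidableEq n] (A : Matrix n n ℂ) :
    Matrix n n ℂ :=
  if hA : A.PosSemidef then
    hA.1.eigenvectorUnitary.1 * diagonal ((↑) ∘ (Real.sqrt ·) ∘ hA.1.eigenvalues) *
      (star hA.1.eigenvectorUnitary : Matrix n n ℂ)
  else 0

/-- Fidelity `F(ρ,σ) = Tr √(√ρ σ √ρ)`. -/
noncomputable def fidelity {n : Type*} [Fintype n] [DecidableEq n] (ρ σ : Matrix n n ℂ) : ℝ :=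
  ((psdSqrt (psdSqrt ρ * σ * psdSqrt ρ)).trace).re

/-- Purified distance `P(ρ,σ) = √(1 − F(ρ,σ)²)`. -/
noncomputable def purifiedDist {n : Type*} [Fintype n] [DecidableEq n]
    (ρ σ : Matrix n n ℂ) : ℝ :=
  Real.sqrt (1 - (fidelity ρ σ) ^ 2)

/-!
Conjugating `ρ ≤ 2^λ σ` by `√ρ` gives `2^{-λ} ρ² ≤ √ρ σ √ρ`. Since the square root is operator
monotone, `2^{-λ/2} ρ ≤ √(√ρ σ √ρ)`, and taking traces yields `F(ρ,σ) ≥ 2^{-λ/2} Tr ρ = 2^{-λ/2}`.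
The bound on the purified distance follows because `P` is decreasing in `F`.
-/

open scoped MatrixOrder Matrix.Norms.L2Operator

theorem psdSqrt_eq_cfcSqrt {n : Type*} [Fintype n] [DecidableEq n] (A : Matrix n n ℂ) :
    psdSqrt A = CFC.sqrt A := by
  by_cases hA : A.PosSemidef
  · rw [psdSqrt, dif_pos hA, CFC.sqrt_eq_cfc, cfc_nnreal_eq_real _ A, hA.1.cfc_eq]
    simp only [IsHermitian.cfc, Unitary.conjStarAlgAut_apply]
    congr 3
    funext i
    simp [max_eq_left (hA.eigenvalues_nonneg i)]
  · rw [psdSqrt, dif_neg hA, CFC.sqrt_of_not_nonneg]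
    rwa [← Matrix.nonneg_iff_posSemidef] at hA

theorem CFC.smul_le_sqrt_sqrt_mul_mul_sqrt {A : Type*} [CStarAlgebra A] [PartialOrder A]
    [StarOrderedRing A] {a b : A} (ha : 0 ≤ a) {c : ℝ} (hc : 0 ≤ c) (hab : c ^ 2 • a ≤ b) :
    c • a ≤ sqrt (sqrt a * b * sqrt a) := by
  have hsq := sqrt_mul_sqrt_self a ha
  have ha_sq : a ^ 2 = sqrt a * a * sqrt a := by
    calc a ^ 2 = sqrt a * sqrt a * (sqrt a * sqrt a) := by rw [hsq, sq]
      _ = sqrt a * (sqrt a * sqrt a) * sqrt a := by simp only [mul_assoc]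
      _ = sqrt a * a * sqrt a := by rw [hsq]
  have hconj : (c • a) ^ 2 ≤ sqrt a * b * sqrt a := by
    calc (c • a) ^ 2 = sqrt a * (c ^ 2 • a) * sqrt a := by
          rw [smul_pow, ha_sq, mul_smul_comm, smul_mul_assoc]
      _ ≤ _ := conjugate_le_conjugate_of_nonneg hab (sqrt_nonneg a)
  calc c • a = sqrt ((c • a) ^ 2) := (sqrt_sq _ (smul_nonneg hc ha)).symm
    _ ≤ _ := sqrt_le_sqrt _ _ hconj

theorem Matrix.re_trace_le_re_trace {n 𝕜 : Type*} [Fintype n] [RCLike 𝕜] {A B : Matrix n n 𝕜}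
    (h : A ≤ B) : RCLike.re A.trace ≤ RCLike.re B.trace :=
  (RCLike.le_iff_re_im.mp ((tracePositiveLinearMap n 𝕜 𝕜).monotone h)).1

theorem mul_re_trace_le_fidelity_of_sq_smul_le {n : Type*} [Fintype n] [DecidableEq n]
    {ρ σ : Matrix n n ℂ} (hρ : ρ.PosSemidef) {c : ℝ} (hc : 0 ≤ c) (h : c ^ 2 • ρ ≤ σ) :
    c * ρ.trace.re ≤ fidelity ρ σ := by
  have := re_trace_le_re_trace (CFC.smul_le_sqrt_sqrt_mul_mul_sqrt hρ.nonneg hc h)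
  simpa [fidelity, psdSqrt_eq_cfcSqrt, trace_smul] using this

theorem purifiedDist_le_of_le_fidelity {n : Type*} [Fintype n] [DecidableEq n]
    {ρ σ : Matrix n n ℂ} {c : ℝ} (hc : 0 ≤ c) (h : c ≤ fidelity ρ σ) :
    purifiedDist ρ σ ≤ Real.sqrt (1 - c ^ 2) := by
  unfold purifiedDist
  gcongr

theorem fidelity_ge_and_purifiedDist_le_of_dmax_general {n : Type*} [Fintype n] [DecidableEq n]
    (ρ σ : Matrix n n ℂ) (hρ : IsDensityMatrix ρ) (lam : ℝ)
    (hLoewner : ((((2:ℝ) ^ lam : ℝ) : ℂ) • σ - ρ).PosSemidef) :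
    (2:ℝ) ^ (-(lam / 2)) ≤ fidelity ρ σ ∧
      purifiedDist ρ σ ≤ Real.sqrt (1 - (2:ℝ) ^ (-lam)) := by
  set c : ℝ := (2:ℝ) ^ (-(lam / 2))
  have hc : 0 ≤ c := by positivity
  have hc_sq : c ^ 2 = (2:ℝ) ^ (-lam) := by
    rw [← Real.rpow_natCast, ← Real.rpow_mul zero_le_two]
    ring_nf
  have hρσ : ρ ≤ (2:ℝ) ^ lam • σ := by
    rwa [Matrix.le_iff, ← Complex.coe_smul]
  have hscaled : c ^ 2 • ρ ≤ σ := by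
    calc c ^ 2 • ρ ≤ c ^ 2 • (2:ℝ) ^ lam • σ := smul_le_smul_of_nonneg_left hρσ (by positivity)
      _ = σ := by
        rw [smul_smul, hc_sq, ← Real.rpow_add zero_lt_two, neg_add_cancel, Real.rpow_zero,
          one_smul]
  have hF : c ≤ fidelity ρ σ := by
    simpa [hρ.2] using mul_re_trace_le_fidelity_of_sq_smul_le hρ.1 hc hscaled
  exact ⟨hF, hc_sq ▸ purifiedDist_le_of_le_fidelity hc hF⟩

/-- If `ρ ≼ 2^λ · σ` in the Loewner order, then `F(ρ,σ) ≥ 2^{−λ/2}` and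
`P(ρ,σ) ≤ √(1 − 2^{−λ})`. -/
theorem fidelity_ge_and_purifiedDist_le_of_dmax {n : Type*} [Fintype n] [DecidableEq n]
    (ρ σ : Matrix n n ℂ) (hρ : IsDensityMatrix ρ) (hσ : IsDensityMatrix σ) (lam : ℝ)
    (hLoewner : ((((2:ℝ) ^ lam : ℝ) : ℂ) • σ - ρ).PosSemidef) :
    (2:ℝ) ^ (-(lam / 2)) ≤ fidelity ρ σ ∧
      purifiedDist ρ σ ≤ Real.sqrt (1 - (2:ℝ) ^ (-lam)) :=
  fidelity_ge_and_purifiedDist_le_of_dmax_general ρ σ hρ lam hLoewner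
end

section
/- Embezzlement of the uniform state, first inequality: Let δ ∈ (0, 1/15) and let b ≤ a ≤ n be positive integers with (n:ℝ) ≥ (a:ℝ)^{1/δ}. Let N ≥ n and M ≥ b be integers, and let W be a unitary matrix on ℂ^N ⊗ ℂ^M (indices {0,…,N−1} and {0,…,M−1}) satisfying W(e_i ⊗ e_0) = e_{⌊i/b⌋} ⊗ e_{(i mod b)} for every 0 ≤ i ≤ N−1. Let μ_b = (1/b) ∑_{e=0}^{b−1} e_e e_e* (the maximally mixed state on the first b standard basis vectors of ℂ^M). Then W (ξ_{a:n} ⊗ e_0 e_0*) W* ≼ (1 + 15δ) · (ξ_{1:n} ⊗ μ_b) in the Loewner order. -/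
open Matrix Kronecker
open scoped ComplexOrder Classical

/-- The partial harmonic sum `S(a,n) = ∑_{i=a}^{n} 1/i`. -/
noncomputable def harmSum (a n : ℕ) : ℝ := ∑ i ∈ Finset.Icc a n, (1 : ℝ) / i

/-- The embezzling state `ξ_{a:n}` on `ℂ^N`: the diagonal (density) matrix whose `(i,i)`
entry is `1/(i·S(a,n))` for `a ≤ i ≤ n` and `0` otherwise. -/
noncomputable def embezState (a n N : ℕ) : Matrix (Fin N) (Fin N) ℂ :=
  Matrix.of fun i j =>
    if i = j ∧ a ≤ (i : ℕ) ∧ (i : ℕ) ≤ n then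
      ((1 / (((i : ℕ) : ℝ) * harmSum a n) : ℝ) : ℂ)
    else 0

/-!
`W` maps the basis vectors `e_i ⊗ e_0` injectively onto the basis vectors
`e_{⌊i/b⌋} ⊗ e_{i mod b}`, so `W (ξ_{a:n} ⊗ e_0 e_0*) W*` is diagonal, with entry `1/(i S(a,n))`
at `(⌊i/b⌋, i mod b)` for `a ≤ i ≤ n`. The right-hand side has entry
`(1 + 15δ)/(⌊i/b⌋ b S(1,n)) ≥ (1 + 15δ)/(i S(1,n))` there, so it suffices that
`S(1,n) ≤ (1 + 15δ) S(a,n)`, i.e. `(1 + 15δ) H_{a-1} ≤ 15δ H_n` for the harmonic numbers `H`.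
For `a ≥ 2` this follows from `H_{a-1} ≤ 1 + log a` and `H_n ≥ log n ≥ (log a)/δ`.
-/

namespace Matrix

variable {ι κ α : Type*} [DecidableEq ι]

lemma of_ite_eq_and_eq_diagonal [Zero α] (P : ι → Prop) [DecidablePred P] (f : ι → α) :
    of (fun i j => if i = j ∧ P i then f i else 0) = diagonal fun i => if P i then f i else 0 := by
  ext i j
  by_cases h : i = j
  · subst h; simp
  · simp [h]

lemma of_ite_and_eq_diagonal [Zero α] [One α] (P : ι → Prop) [DecidablePred P]
    (hP : ∀ i j, P i → P j → i = j) :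
    of (fun i j => if P i ∧ P j then (1 : α) else 0) = diagonal fun i => if P i then 1 else 0 := by
  ext i j
  by_cases h : i = j
  · subst h; simp
  · have : ¬ (P i ∧ P j) := fun hij => h (hP i j hij.1 hij.2)
    simp [this, diagonal_apply_ne _ h]

lemma mul_diagonal_mul_conjTranspose_of_indicator [Fintype ι] [DecidableEq κ] [Semiring α]
    [StarRing α] (V : Matrix κ ι α) (d : ι → α) (R : κ → ι → Prop) [∀ p, DecidablePred (R p)]
    (hV : ∀ p x, d x ≠ 0 → V p x = if R p x then 1 else 0)
    (hR : ∀ p p' x, R p x → R p' x → p = p') :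
    V * diagonal d * Vᴴ = diagonal fun p => ∑ x, if R p x then d x else 0 := by
  ext p p'
  rw [mul_apply, diagonal_apply]
  simp only [mul_diagonal, conjTranspose_apply]
  split_ifs with hpp
  · subst hpp
    refine Finset.sum_congr rfl fun x _ => ?_
    by_cases hd : d x = 0
    · simp [hd]
    · rw [hV p x hd]; split_ifs <;> simp
  · refine Finset.sum_eq_zero fun x _ => ?_
    by_cases hd : d x = 0
    · simp [hd]
    · rw [hV p x hd, hV p' x hd]
      split_ifs with h h'
      · exact absurd (hR p p' x h h') hpp
      all_goals simp

end Matrix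

lemma Finset.sum_ite_le_of_unique {ι M : Type*} [Fintype ι] [AddCommMonoid M] [Preorder M]
    {P : ι → Prop} [DecidablePred P] (hP : ∀ i j, P i → P j → i = j) {f : ι → M} {t : M}
    (ht : 0 ≤ t) (hf : ∀ i, P i → f i ≤ t) : ∑ i, (if P i then f i else 0) ≤ t := by
  by_cases h : ∃ i, P i
  · obtain ⟨i, hi⟩ := h
    rw [Finset.sum_eq_single i (fun j _ hji => if_neg fun hj => hji (hP j i hj hi))
      (by simp), if_pos hi]
    exact hf i hi
  · rwa [Finset.sum_eq_zero fun i _ => if_neg fun hi => h ⟨i, hi⟩]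

lemma harmSum_nonneg (a n : ℕ) : 0 ≤ harmSum a n :=
  Finset.sum_nonneg fun _ _ => by positivity

lemma harmSum_pos {a n : ℕ} (ha : 0 < a) (han : a ≤ n) : 0 < harmSum a n :=
  Finset.sum_pos
    (fun i hi => one_div_pos.mpr (by exact_mod_cast ha.trans_le (Finset.mem_Icc.mp hi).1))
    ⟨a, Finset.mem_Icc.mpr ⟨le_rfl, han⟩⟩

lemma harmSum_one (n : ℕ) : harmSum 1 n = harmonic n := by
  simp [harmSum, harmonic_eq_sum_Icc]

lemma harmonic_add_harmSum {k n : ℕ} (hkn : k ≤ n) :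
    (harmonic k : ℝ) + harmSum (k + 1) n = harmonic n := by
  simp only [← harmSum_one, harmSum, Finset.Icc_add_one_left_eq_Ioc]
  exact Finset.sum_Ioc_consecutive _ (Nat.zero_le k) hkn

lemma harmSum_one_le_mul_harmSum {δ : ℝ} (hδ0 : 0 < δ) (hδ : δ < 1 / 15) {a n : ℕ}
    (ha : 1 ≤ a) (han : a ≤ n) (hn : (a : ℝ) ^ (1 / δ) ≤ n) :
    harmSum 1 n ≤ (1 + 15 * δ) * harmSum a n := by
  obtain ⟨k, rfl⟩ : ∃ k, a = k + 1 := ⟨a - 1, by omega⟩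
  have hsplit := harmonic_add_harmSum (by omega : k ≤ n)
  rw [harmSum_one, eq_sub_of_add_eq' hsplit]
  suffices (1 + 15 * δ) * harmonic k ≤ 15 * δ * harmonic n by linarith
  have hHn : Real.log n ≤ harmonic n :=
    (Real.log_le_log (by exact_mod_cast (by omega : 0 < n)) (by push_cast; linarith)).trans
      (log_add_one_le_harmonic n)
  have hHn0 : 0 ≤ Real.log n := Real.log_natCast_nonneg n
  rcases Nat.eq_zero_or_pos k with rfl | hk
  · simp only [harmonic_zero, Rat.cast_zero, mul_zero]
    exact mul_nonneg (by positivity) (hHn0.trans hHn)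
  set L := Real.log (k + 1 : ℕ)
  have hL : Real.log 2 ≤ L := Real.log_le_log two_pos (by exact_mod_cast (by omega : 2 ≤ k + 1))
  have hHk : (harmonic k : ℝ) ≤ 1 + L :=
    (harmonic_le_one_add_log k).trans <|
      add_le_add_right (Real.log_le_log (by exact_mod_cast hk) (by simp)) 1
  have hHk0 : (0 : ℝ) ≤ harmonic k := by exact_mod_cast (harmonic_pos hk.ne').le
  have hLn : L ≤ δ * Real.log n := by
    have := Real.log_le_log (by positivity) hn
    rwa [Real.log_rpow (by positivity), one_div, inv_mul_le_iff₀ hδ0] at this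
  calc (1 + 15 * δ) * harmonic k ≤ 2 * (1 + L) := by nlinarith
    _ ≤ 15 * L := by linarith [Real.log_two_gt_d9]
    _ ≤ 15 * δ * Real.log n := by linarith
    _ ≤ 15 * δ * harmonic n := by gcongr

noncomputable def embezWeight (a n i : ℕ) : ℝ :=
  if a ≤ i ∧ i ≤ n then 1 / (i * harmSum a n) else 0

lemma embezWeight_nonneg (a n i : ℕ) : 0 ≤ embezWeight a n i := by
  unfold embezWeight
  have := harmSum_nonneg a n
  split_ifs <;> positivity

lemma embezState_eq_diagonal (a n N : ℕ) :
    embezState a n N = diagonal fun i : Fin N => (embezWeight a n i : ℂ) := by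
  rw [embezState, of_ite_eq_and_eq_diagonal]
  simp only [embezWeight, apply_ite Complex.ofReal, Complex.ofReal_zero]

lemma embezWeight_le_mul_embezWeight_div {a b n : ℕ} {c : ℝ} (hb : 0 < b) (hba : b ≤ a)
    (hc : 0 ≤ c) (hS : harmSum 1 n ≤ c * harmSum a n) (i : ℕ) :
    embezWeight a n i ≤ c * embezWeight 1 n (i / b) / b := by
  have hS1₀ := harmSum_nonneg 1 n
  unfold embezWeight
  split_ifs with hi hq hq
  · have hi0 : (0 : ℝ) < i := by exact_mod_cast hb.trans_le (hba.trans hi.1)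
    have hq0 : (0 : ℝ) < (i / b : ℕ) := by exact_mod_cast hq.1
    have hSa := harmSum_pos (hb.trans_le hba) (hi.1.trans hi.2)
    have hS1 := harmSum_pos one_pos (hq.1.trans hq.2)
    have hqb : ((i / b : ℕ) : ℝ) * b ≤ i := by exact_mod_cast Nat.div_mul_le_self i b
    rw [mul_one_div, div_div, div_le_div_iff₀ (by positivity) (by positivity)]
    calc 1 * ((i / b : ℕ) * harmSum 1 n * b) = (i / b : ℕ) * b * harmSum 1 n := by ring
      _ ≤ i * (c * harmSum a n) := mul_le_mul hqb hS hS1.le hi0.le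
      _ = c * (i * harmSum a n) := by ring
  · exact absurd ⟨(Nat.one_le_div_iff hb).mpr (hba.trans hi.1),
      (Nat.div_le_self i b).trans hi.2⟩ hq
  · positivity
  · simp

def IsDivModImage {N M : ℕ} (b : ℕ) (p x : Fin N × Fin M) : Prop :=
  (x.2 : ℕ) = 0 ∧ (p.1 : ℕ) = x.1 / b ∧ (p.2 : ℕ) = x.1 % b

namespace IsDivModImage

variable {N M b : ℕ} {p p' x y : Fin N × Fin M}

lemma left_unique (hp : IsDivModImage b p x) (hp' : IsDivModImage b p' x) : p = p' :=
  Prod.ext (Fin.ext (hp.2.1.trans hp'.2.1.symm)) (Fin.ext (hp.2.2.trans hp'.2.2.symm))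

lemma right_unique (hx : IsDivModImage b p x) (hy : IsDivModImage b p y) : x = y := by
  obtain ⟨hx0, hx1, hx2⟩ := hx
  obtain ⟨hy0, hy1, hy2⟩ := hy
  refine Prod.ext (Fin.ext ?_) (Fin.ext (hx0.trans hy0.symm))
  rw [← Nat.div_add_mod x.1 b, ← Nat.div_add_mod y.1 b, ← hx1, ← hx2, ← hy1, ← hy2]

end IsDivModImage

lemma sum_ite_isDivModImage_le {N M a b n : ℕ} {c : ℝ} (hb : 0 < b) (hba : b ≤ a) (hc : 0 ≤ c)
    (hS : harmSum 1 n ≤ c * harmSum a n) (p : Fin N × Fin M) :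
    ∑ x, (if IsDivModImage b p x then
        embezWeight a n x.1 * (if (x.2 : ℕ) = 0 then 1 else 0) else 0)
      ≤ c * (embezWeight 1 n p.1 * (if (p.2 : ℕ) < b then 1 / (b : ℝ) else 0)) := by
  have hub : (0 : ℝ) ≤ if (p.2 : ℕ) < b then 1 / (b : ℝ) else 0 := by split_ifs <;> positivity
  refine Finset.sum_ite_le_of_unique (fun _ _ => IsDivModImage.right_unique)
    (mul_nonneg hc (mul_nonneg (embezWeight_nonneg 1 n p.1) hub)) ?_
  rintro x ⟨hx0, hx1, hx2⟩
  rw [if_pos hx0, mul_one, hx1, if_pos (hx2 ▸ Nat.mod_lt _ hb), mul_one_div, ← mul_div_assoc]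
  exact embezWeight_le_mul_embezWeight_div hb hba hc hS x.1

theorem embezzle_uniform_first_general (δ : ℝ) (hδ0 : 0 < δ) (hδ : δ < 1 / 15)
    (b a n N M : ℕ) (hb : 0 < b) (hba : b ≤ a) (han : a ≤ n)
    (hn : ((a : ℝ)) ^ ((1 : ℝ) / δ) ≤ (n : ℝ))
    (W : Matrix (Fin N × Fin M) (Fin N × Fin M) ℂ)
    (hWcol : ∀ (i : Fin N) (p : Fin N × Fin M) (z : Fin M), (z : ℕ) = 0 →
      W p (i, z) =
        if (p.1 : ℕ) = (i : ℕ) / b ∧ (p.2 : ℕ) = (i : ℕ) % b then 1 else 0) :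
    ((((1 + 15 * δ : ℝ)) : ℂ) •
        (embezState 1 n N ⊗ₖ
          Matrix.of (fun z z' : Fin M =>
            if z = z' ∧ (z : ℕ) < b then ((1 / (b : ℝ) : ℝ) : ℂ) else 0))
      - W * (embezState a n N ⊗ₖ
          Matrix.of (fun z z' : Fin M =>
            if (z : ℕ) = 0 ∧ (z' : ℕ) = 0 then 1 else 0)) * Wᴴ).PosSemidef := by
  have hS := harmSum_one_le_mul_harmSum hδ0 hδ (hb.trans_le hba) han hn
  have hcol : ∀ p x, ((embezWeight a n x.1 : ℂ) * if (x.2 : ℕ) = 0 then 1 else 0) ≠ 0 →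
      W p x = if IsDivModImage b p x then 1 else 0 := by
    intro p x hx
    have hx2 : (x.2 : ℕ) = 0 := by
      by_contra h
      simp [h] at hx
    rw [hWcol x.1 p x.2 hx2]
    simp [IsDivModImage, hx2]
  rw [embezState_eq_diagonal, embezState_eq_diagonal, of_ite_eq_and_eq_diagonal,
    of_ite_and_eq_diagonal _ fun _ _ h h' => Fin.ext (h.trans h'.symm),
    diagonal_kronecker_diagonal, diagonal_kronecker_diagonal,
    mul_diagonal_mul_conjTranspose_of_indicator W _ _ hcol fun _ _ _ => IsDivModImage.left_unique,
    ← diagonal_smul, diagonal_sub]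
  refine PosSemidef.diagonal fun p => ?_
  have key := sum_ite_isDivModImage_le hb hba (by linarith) hS p
  simpa [apply_ite Complex.ofReal] using Complex.zero_le_real.mpr (sub_nonneg.mpr key)

/-- Embezzlement of the uniform state, first inequality:
`W (ξ_{a:n} ⊗ |0⟩⟨0|) W* ≼ (1 + 15δ) · (ξ_{1:n} ⊗ μ_b)`. -/
theorem embezzle_uniform_first (δ : ℝ) (hδ0 : 0 < δ) (hδ : δ < 1 / 15)
    (b a n N M : ℕ) (hb : 0 < b) (hba : b ≤ a) (han : a ≤ n)
    (hn : ((a : ℝ)) ^ ((1 : ℝ) / δ) ≤ (n : ℝ)) (hN : n ≤ N) (hM : b ≤ M)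
    (W : Matrix (Fin N × Fin M) (Fin N × Fin M) ℂ)
    (hW : W ∈ Matrix.unitaryGroup (Fin N × Fin M) ℂ)
    (hWcol : ∀ (i : Fin N) (p : Fin N × Fin M) (z : Fin M), (z : ℕ) = 0 →
      W p (i, z) =
        if (p.1 : ℕ) = (i : ℕ) / b ∧ (p.2 : ℕ) = (i : ℕ) % b then 1 else 0) :
    ((((1 + 15 * δ : ℝ)) : ℂ) •
        (embezState 1 n N ⊗ₖ
          Matrix.of (fun z z' : Fin M =>
            if z = z' ∧ (z : ℕ) < b then ((1 / (b : ℝ) : ℝ) : ℂ) else 0))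
      - W * (embezState a n N ⊗ₖ
          Matrix.of (fun z z' : Fin M =>
            if (z : ℕ) = 0 ∧ (z' : ℕ) = 0 then 1 else 0)) * Wᴴ).PosSemidef :=
  embezzle_uniform_first_general δ hδ0 hδ b a n N M hb hba han hn W hWcol
end

section
/- Coherent measurement of a register via controlled shifts and a maximally entangled state: Let d ≥ 1 and let K be a finite type. On ℂ^d (indices {0,…,d−1}), let P_j denote the cyclic shift unitary defined by P_j e_f = e_{(f+j) mod d}, and let U := ∑_{j=0}^{d−1} |j⟩⟨j| ⊗ P_j, a unitary on ℂ^d ⊗ ℂ^d (registers J and F). Let Ψ = |Ψ⟩⟨Ψ| with |Ψ⟩ = (1/√d) ∑_{f=0}^{d−1} e_f ⊗ e_f, the maximally entangled state on two further copies F, F' of ℂ^d. Then for every density matrix ψ on K ⊗ J (i.e., indexed by κ × {0,…,d−1}), the partial trace over F and F' of (1_K ⊗ U ⊗ 1_{F'}) (ψ ⊗ Ψ) (1_K ⊗ U ⊗ 1_{F'})* equals ∑_{j=0}^{d−1} (1_K ⊗ |j⟩⟨j|) ψ (1_K ⊗ |j⟩⟨j|), i.e., the state ψ dephased in the register J. 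-/
open Matrix Kronecker
open scoped ComplexOrder Classical

/-- The operator `1_K ⊗ U ⊗ 1_{F'}` on `K ⊗ J ⊗ F ⊗ F'`, where
`U = ∑_{j=0}^{d-1} |j⟩⟨j| ⊗ P_j` and `P_j` is the cyclic shift `P_j e_f = e_{(f+j) mod d}`. -/
noncomputable def coherentCopyOp (K : Type*) (d : ℕ) :
    Matrix (K × Fin d × Fin d × Fin d) (K × Fin d × Fin d × Fin d) ℂ :=
  Matrix.of fun x y =>
    if x.1 = y.1 ∧ x.2.1 = y.2.1 ∧ x.2.2.2 = y.2.2.2 ∧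
        (x.2.2.1 : ℕ) = ((y.2.2.1 : ℕ) + (y.2.1 : ℕ)) % d
    then 1 else 0

/-- The state `ψ ⊗ Ψ` on `K ⊗ J ⊗ F ⊗ F'`, where `Ψ = |Ψ⟩⟨Ψ|` with
`|Ψ⟩ = (1/√d) ∑_f e_f ⊗ e_f` the maximally entangled state on `F ⊗ F'`. -/
noncomputable def psiTensorMaxEnt {K : Type*} {d : ℕ}
    (ψ : Matrix (K × Fin d) (K × Fin d) ℂ) :
    Matrix (K × Fin d × Fin d × Fin d) (K × Fin d × Fin d × Fin d) ℂ :=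
  Matrix.of fun x y =>
    ψ (x.1, x.2.1) (y.1, y.2.1) *
      (if x.2.2.1 = x.2.2.2 ∧ y.2.2.1 = y.2.2.2 then ((1 / (d : ℝ) : ℝ) : ℂ) else 0)

/-- Partial trace over the last two factors `F, F'`. -/
noncomputable def ptraceFF {K : Type*} {d : ℕ} [Fintype K]
    (M : Matrix (K × Fin d × Fin d × Fin d) (K × Fin d × Fin d × Fin d) ℂ) :
    Matrix (K × Fin d) (K × Fin d) ℂ :=
  Matrix.of fun g g' => ∑ f : Fin d, ∑ f' : Fin d,
    M (g.1, g.2, f, f') (g'.1, g'.2, f, f')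

/-! The operator `U` permutes the standard basis, `(k, j, f, f') ↦ (k, j, f + j, f')`, so
conjugating `ψ ⊗ Ψ` by it only relabels entries. After tracing out `F, F'` the entry of index
`((k, a), (k', a'))` is `ψ (k, a) (k', a') / d` times the number of `f` with `f - a = f - a'`,
which is `d` if `a = a'` and `0` otherwise: exactly the entry of `ψ` dephased in `J`. -/

namespace PEquiv

theorem conjTranspose_toMatrix_toPEquiv {m n R : Type*} [DecidableEq m] [DecidableEq n]
    [Semiring R] [StarRing R] (σ : m ≃ n) :
    (σ.toPEquiv.toMatrix : Matrix m n R)ᴴ = σ.symm.toPEquiv.toMatrix := by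
  ext i j
  simp only [conjTranspose_apply, toMatrix_apply, Equiv.toPEquiv_apply, Option.mem_def,
    Option.some.injEq, Equiv.symm_apply_eq, @eq_comm _ i, apply_ite (star : R → R), star_one,
    star_zero]

theorem toMatrix_toPEquiv_mul_mul_conjTranspose {m n R : Type*} [DecidableEq m] [Fintype n]
    [DecidableEq n] [Semiring R] [StarRing R] (σ : m ≃ n) (M : Matrix n n R) :
    (σ.toPEquiv.toMatrix : Matrix m n R) * M * (σ.toPEquiv.toMatrix : Matrix m n R)ᴴ =
      M.submatrix σ σ := by
  rw [conjTranspose_toMatrix_toPEquiv, toMatrix_toPEquiv_mul, mul_toMatrix_toPEquiv,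
    submatrix_submatrix, Equiv.symm_symm]
  rfl

end PEquiv

theorem sum_one_kronecker_single_conj_apply {K ι R : Type*} [Fintype K] [DecidableEq K]
    [Fintype ι] [DecidableEq ι] [Semiring R] (ψ : Matrix (K × ι) (K × ι) R) (x y : K × ι) :
    (∑ j : ι, ((1 : Matrix K K R) ⊗ₖ single j j (1 : R)) * ψ *
        ((1 : Matrix K K R) ⊗ₖ single j j (1 : R))) x y =
      if x.2 = y.2 then ψ x y else 0 := by
  simp only [← diagonal_single, ← diagonal_one, diagonal_kronecker_diagonal, diagonal_mul,
    mul_diagonal, Matrix.sum_apply, Pi.single_apply, one_mul, mul_ite, ite_mul, mul_one, mul_zero,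
    zero_mul, Finset.sum_ite_eq, Finset.mem_univ, if_true]

def unshiftByControl (K : Type*) (d : ℕ) [NeZero d] :
    (K × Fin d × Fin d × Fin d) ≃ (K × Fin d × Fin d × Fin d) where
  toFun x := (x.1, x.2.1, x.2.2.1 - x.2.1, x.2.2.2)
  invFun x := (x.1, x.2.1, x.2.2.1 + x.2.1, x.2.2.2)
  left_inv x := by simp
  right_inv x := by simp

theorem coherentCopyOp_eq_toMatrix {K : Type*} [DecidableEq K] (d : ℕ) [NeZero d] :
    coherentCopyOp K d = (unshiftByControl K d).toPEquiv.toMatrix := by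
  ext ⟨k, j, f, f'⟩ ⟨k', j', g, g'⟩
  have hshift : (f : ℕ) = ((g : ℕ) + (j' : ℕ)) % d ↔ f - j' = g := by
    rw [sub_eq_iff_eq_add, ← Fin.val_add, Fin.val_inj]
  simp only [coherentCopyOp, of_apply, PEquiv.toMatrix_apply, Equiv.toPEquiv_apply,
    Option.mem_def, Option.some.injEq, unshiftByControl, Equiv.coe_fn_mk, Prod.mk.injEq, hshift]
  grind

theorem ptraceFF_submatrix_psiTensorMaxEnt_apply {K : Type*} [Fintype K] {d : ℕ} [NeZero d]
    (ψ : Matrix (K × Fin d) (K × Fin d) ℂ) (x y : K × Fin d) :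
    ptraceFF ((psiTensorMaxEnt ψ).submatrix (unshiftByControl K d) (unshiftByControl K d)) x y =
      if x.2 = y.2 then ψ x y else 0 := by
  simp only [ptraceFF, psiTensorMaxEnt, unshiftByControl, of_apply, submatrix_apply,
    Equiv.coe_fn_mk, sub_right_inj, ite_and, mul_ite, mul_zero, Finset.sum_ite_eq,
    Finset.mem_univ, if_true]
  rw [Finset.sum_const, Finset.card_univ, Fintype.card_fin, Prod.mk.eta, Prod.mk.eta]
  rcases eq_or_ne x.2 y.2 with h | h
  · have hd : (d : ℂ) ≠ 0 := Nat.cast_ne_zero.mpr (NeZero.ne d)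
    simp only [h, if_true, nsmul_eq_mul]
    push_cast
    field_simp
  · simp [h, Ne.symm h]

theorem coherent_measurement_general {K : Type*} [Fintype K] [DecidableEq K]
    (d : ℕ)
    (ψ : Matrix (K × Fin d) (K × Fin d) ℂ) :
    ptraceFF (coherentCopyOp K d * psiTensorMaxEnt ψ * (coherentCopyOp K d)ᴴ) =
      ∑ j : Fin d,
        ((1 : Matrix K K ℂ) ⊗ₖ Matrix.single j j (1 : ℂ)) * ψ *
          ((1 : Matrix K K ℂ) ⊗ₖ Matrix.single j j (1 : ℂ)) := by
  ext x y
  have : NeZero d := NeZero.of_pos x.2.pos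
  rw [coherentCopyOp_eq_toMatrix, PEquiv.toMatrix_toPEquiv_mul_mul_conjTranspose,
    ptraceFF_submatrix_psiTensorMaxEnt_apply, sum_one_kronecker_single_conj_apply]

/-- Coherent measurement of a register via controlled shifts and a maximally entangled
state: tracing out `F, F'` from `(1_K ⊗ U ⊗ 1_{F'}) (ψ ⊗ Ψ) (1_K ⊗ U ⊗ 1_{F'})*` yields
the state `ψ` dephased in the register `J`. -/
theorem coherent_measurement {K : Type*} [Fintype K] [DecidableEq K]
    (d : ℕ) (hd : 1 ≤ d)
    (ψ : Matrix (K × Fin d) (K × Fin d) ℂ) (hψ : IsDensityMatrix ψ) :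
    ptraceFF (coherentCopyOp K d * psiTensorMaxEnt ψ * (coherentCopyOp K d)ᴴ) =
      ∑ j : Fin d,
        ((1 : Matrix K K ℂ) ⊗ₖ Matrix.single j j (1 : ℂ)) * ψ *
          ((1 : Matrix K K ℂ) ⊗ₖ Matrix.single j j (1 : ℂ)) :=
  coherent_measurement_general d ψ
end

section
/- A read-only unitary preserves marginals of states with a classical control register: Let α, κ, β be finite types and let ρ be a density matrix on α × κ × β (registers A, J, B) that is classical on J, i.e., (1_A ⊗ |j⟩⟨j| ⊗ 1_B) ρ (1_A ⊗ |j'⟩⟨j'| ⊗ 1_B) = 0 whenever j ≠ j'. Let U = ∑_{j∈κ} |j⟩⟨j| ⊗ U_j be a unitary on κ × β that is read-only on J (each U_j a unitary on β). Then Tr_B[(1_A ⊗ U) ρ (1_A ⊗ U)*] = Tr_B ρ, where Tr_B denotes the partial trace over the β factor. -/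
open Matrix
open scoped ComplexOrder Classical

/-- Partial trace over the last factor `β` of a state on `α ⊗ κ ⊗ β`. -/
noncomputable def ptraceThird {α κ β : Type*} [Fintype β]
    (M : Matrix (α × κ × β) (α × κ × β) ℂ) : Matrix (α × κ) (α × κ) ℂ :=
  Matrix.of fun g g' => ∑ b1 : β, M (g.1, g.2, b1) (g'.1, g'.2, b1)

/-- A read-only unitary preserves marginals of states with a classical control register:
if `ρ` is classical on `J` (the middle register) and `U = ∑_j |j⟩⟨j| ⊗ U_j` is read-only
on `J`, then `Tr_B[(1_A ⊗ U) ρ (1_A ⊗ U)*] = Tr_B ρ`. -/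
theorem readonly_unitary_preserves_marginal {α κ β : Type*}
    [Fintype α] [DecidableEq α] [Fintype κ] [DecidableEq κ] [Fintype β] [DecidableEq β]
    (ρ : Matrix (α × κ × β) (α × κ × β) ℂ) (hρ : IsDensityMatrix ρ)
    (hclass : ∀ j j' : κ, j ≠ j' →
      (Matrix.of fun x y : α × κ × β => if x = y ∧ x.2.1 = j then (1 : ℂ) else 0) * ρ *
        (Matrix.of fun x y : α × κ × β => if x = y ∧ x.2.1 = j' then (1 : ℂ) else 0) = 0)
    (Uj : κ → Matrix β β ℂ) (hUj : ∀ j, Uj j ∈ Matrix.unitaryGroup β ℂ) :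
    ptraceThird
      ((Matrix.of fun x y : α × κ × β =>
          if x.1 = y.1 ∧ x.2.1 = y.2.1 then Uj x.2.1 x.2.2 y.2.2 else 0) * ρ *
        (Matrix.of fun x y : α × κ × β =>
          if x.1 = y.1 ∧ x.2.1 = y.2.1 then Uj x.2.1 x.2.2 y.2.2 else 0)ᴴ) =
      ptraceThird ρ := by
  have hP : ∀ (jj : κ) (M : Matrix (α × κ × β) (α × κ × β) ℂ),
      (Matrix.of fun x y : α × κ × β => if x = y ∧ x.2.1 = jj then (1 : ℂ) else 0) * M =
        Matrix.of fun x y => if x.2.1 = jj then M x y else 0 := by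
    intro jj M; ext x y
    simp [Matrix.mul_apply, ite_and, ite_mul]
  have hP' : ∀ (jj : κ) (M : Matrix (α × κ × β) (α × κ × β) ℂ),
      M * (Matrix.of fun x y : α × κ × β => if x = y ∧ x.2.1 = jj then (1 : ℂ) else 0) =
        Matrix.of fun x y => if y.2.1 = jj then M x y else 0 := by
    intro jj M; ext x y
    simp [Matrix.mul_apply, ite_and, mul_ite]
  have hρ0 : ∀ (a a' : α) (j j' : κ) (b b' : β), j ≠ j' →
      ρ (a, j, b) (a', j', b') = 0 := by
    intro a a' j j' b b' h
    have hc := hclass j j' h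
    rw [hP, hP'] at hc
    have := congrFun (congrFun hc (a, j, b)) (a', j', b')
    simpa using this
  have hU : ∀ (j : κ) (b1 b2 : β),
      (∑ b : β, star (Uj j b b2) * Uj j b b1) = if b2 = b1 then 1 else 0 := by
    intro j b1 b2
    have h := Matrix.mem_unitaryGroup_iff'.mp (hUj j)
    have := congrFun (congrFun h b2) b1
    simpa [Matrix.mul_apply, Matrix.one_apply, Matrix.star_apply] using this
  ext ⟨a, j⟩ ⟨a', j'⟩
  simp only [ptraceThird, Matrix.mul_apply, Matrix.conjTranspose_apply, Matrix.of_apply,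
    Fintype.sum_prod_type, ite_and, ite_mul, mul_ite, zero_mul, mul_zero,
    Finset.sum_ite_eq, Finset.mem_univ, if_true, apply_ite (starRingEnd ℂ), map_zero, Finset.sum_ite_irrel,
    Finset.sum_const_zero]
  by_cases h : j = j'
  · subst h

    have key : ∀ x3 : β,
        (∑ b : β, (∑ y3 : β, Uj j b y3 * ρ (a, j, y3) (a', j, x3)) * star (Uj j b x3)) =
        ρ (a, j, x3) (a', j, x3) := by
      intro x3
      simp only [Finset.sum_mul]
      rw [Finset.sum_comm]
      have hfac : ∀ y3 : β,
          (∑ b : β, Uj j b y3 * ρ (a, j, y3) (a', j, x3) * star (Uj j b x3)) =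
          (∑ b : β, star (Uj j b x3) * Uj j b y3) * ρ (a, j, y3) (a', j, x3) := by
        intro y3; rw [Finset.sum_mul]
        exact Finset.sum_congr rfl fun b _ => by ring
      simp only [hfac, hU, ite_mul, one_mul, zero_mul]
      simp
    simp only [apply_ite (star : ℂ → ℂ), star_zero, mul_ite, mul_zero,
      Finset.sum_ite_eq, Finset.mem_univ, if_true, Finset.sum_ite_irrel,
      Finset.sum_const_zero]
    rw [Finset.sum_comm]
    exact Finset.sum_congr rfl fun x3 _ => key x3
  · have hz : ∀ (b b' : β), ρ (a, j, b) (a', j', b') = 0 := fun b b' => hρ0 a a' j j' b b' h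
    simp [apply_ite (starRingEnd ℂ), mul_ite, hz, h]
end

section
/- Composition of a projection with a hypothesis test (key step in the proof of the main theorem): Let ε ∈ (0,1]. Let κ be a density matrix and τ, ω positive semidefinite matrices of the same size, let Π̃ be an orthogonal projection and Π' a matrix with 0 ≼ Π' ≼ 1, all of the same size, such that: Tr(Π̃ κ) ≥ 1 − ε⁴/4, Π̃ ω Π̃ ≼ 2τ, and Tr(Π' κ) ≥ 1 − ε⁴/4. Then the operator Π := Π̃ Π' Π̃ satisfies 0 ≼ Π ≼ 1, Tr(Π κ) ≥ 1 − ε², and Tr(Π ω) ≤ 2 · Tr(Π' τ). -/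
/-!
Write `Q = 1 - Π̃`. For every real `t`, expanding `0 ≼ (tΠ̃ - Q) Π' (tΠ̃ - Q)` and using
`Π' = (Π̃ + Q) Π' (Π̃ + Q)` gives `t Π' ≼ t(1+t) Π̃Π'Π̃ + (1+t) QΠ'Q`, and `QΠ'Q ≼ Q`.
Tracing against `κ`, with `Tr(Π'κ) ≥ 1 - ε⁴/4` and `Tr(Qκ) ≤ ε⁴/4`, the choice `t = ε²/2`
(so that `ε⁴/4 = t²`) leaves exactly `Tr(Π̃Π'Π̃ κ) ≥ 1 - 2t = 1 - ε²`.
The remaining claims are monotonicity of `X ↦ Π̃XΠ̃` in the Loewner order and of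
`X ↦ Tr(Xσ)` for `σ ≽ 0`.
-/

open Matrix
open scoped ComplexOrder Classical MatrixOrder

theorem IsSelfAdjoint.smul_le_conjugate_add_conjugate {R : Type*} [Ring R] [StarRing R]
    [PartialOrder R] [StarOrderedRing R] [Algebra ℝ R] [StarModule ℝ R] {p x : R}
    (hp : IsSelfAdjoint p) (hx : 0 ≤ x) (t : ℝ) :
    t • x ≤ (t * (1 + t)) • (p * x * p) + (1 + t) • ((1 - p) * x * (1 - p)) := by
  have hc : IsSelfAdjoint (t • p - (1 - p)) :=
    ((IsSelfAdjoint.all t).smul hp).sub ((IsSelfAdjoint.one R).sub hp)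
  rw [← sub_nonneg]
  convert hc.conjugate_nonneg hx using 1
  simp only [sub_mul, mul_sub, one_mul, mul_one, smul_mul_assoc, mul_smul_comm, smul_smul,
    smul_sub]
  module

namespace Matrix

variable {n 𝕜 : Type*} [Fintype n] [DecidableEq n] [RCLike 𝕜]

theorem trace_mul_nonneg {A B : Matrix n n 𝕜} (hA : 0 ≤ A) (hB : 0 ≤ B) :
    0 ≤ (A * B).trace := by
  have hsqrt := IsSelfAdjoint.of_nonneg (CFC.sqrt_nonneg B)
  rw [← CFC.sqrt_mul_sqrt_self B hB, ← mul_assoc, trace_mul_cycle]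
  exact (nonneg_iff_posSemidef.mp (hsqrt.conjugate_nonneg hA)).trace_nonneg

theorem trace_mul_le_trace_mul {A B C : Matrix n n 𝕜} (hAB : A ≤ B) (hC : 0 ≤ C) :
    (A * C).trace ≤ (B * C).trace := by
  rw [← sub_nonneg, ← trace_sub, ← sub_mul]
  exact trace_mul_nonneg (sub_nonneg.mpr hAB) hC

end Matrix

theorem IsStarProjection.re_trace_mul_le {n : Type*} [Fintype n] [DecidableEq n]
    {P X ρ : Matrix n n ℂ} (hP : IsStarProjection P) (hX0 : 0 ≤ X) (hX1 : X ≤ 1) (hρ : 0 ≤ ρ)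
    {t : ℝ} (ht : 0 ≤ t) :
    t * (X * ρ).trace.re ≤
      t * (1 + t) * (P * X * P * ρ).trace.re + (1 + t) * ((1 - P) * ρ).trace.re := by
  have hsplit := Complex.le_def.mp <| trace_mul_le_trace_mul
    (hP.isSelfAdjoint.smul_le_conjugate_add_conjugate hX0 t) hρ
  have hcompl := Complex.le_def.mp <|
    trace_mul_le_trace_mul (hP.one_sub.isSelfAdjoint.conjugate_le_conjugate hX1) hρ
  rw [mul_one, hP.one_sub.isIdempotentElem.eq] at hcompl
  simp only [add_mul, smul_mul_assoc, trace_add, trace_smul, Complex.add_re, Complex.real_smul,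
    Complex.re_ofReal_mul] at hsplit
  nlinarith [hsplit.1, hcompl.1]

theorem projection_compose_hypothesis_test_general {n : Type*} [Fintype n] [DecidableEq n]
    (ε : ℝ) (hε0 : 0 < ε)
    (κ τ ω Pt P' : Matrix n n ℂ)
    (hκ : IsDensityMatrix κ)
    (hPt : Pt.IsHermitian) (hPtproj : Pt * Pt = Pt)
    (hP'0 : P'.PosSemidef) (hP'1 : ((1 : Matrix n n ℂ) - P').PosSemidef)
    (h1 : 1 - ε ^ 4 / 4 ≤ ((Pt * κ).trace).re)
    (h2 : ((2 : ℂ) • τ - Pt * ω * Pt).PosSemidef)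
    (h3 : 1 - ε ^ 4 / 4 ≤ ((P' * κ).trace).re) :
    (Pt * P' * Pt).PosSemidef ∧
    ((1 : Matrix n n ℂ) - Pt * P' * Pt).PosSemidef ∧
    1 - ε ^ 2 ≤ (((Pt * P' * Pt) * κ).trace).re ∧
    (((Pt * P' * Pt) * ω).trace).re ≤ 2 * ((P' * τ).trace).re := by
  obtain ⟨hκ0, hκ1⟩ := hκ
  have hproj : IsStarProjection Pt := ⟨hPtproj, hPt⟩
  refine ⟨nonneg_iff_posSemidef.mp (hproj.isSelfAdjoint.conjugate_nonneg hP'0.nonneg), ?_, ?_, ?_⟩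
  · have hconj := hproj.isSelfAdjoint.conjugate_le_conjugate hP'1
    rw [mul_one, hPtproj] at hconj
    exact hconj.trans hproj.le_one
  · have hcompl : ((1 - Pt) * κ).trace.re ≤ ε ^ 4 / 4 := by
      rw [sub_mul, one_mul, trace_sub, Complex.sub_re, hκ1, Complex.one_re]
      linarith
    have hsplit :=
      hproj.re_trace_mul_le hP'0.nonneg hP'1 hκ0.nonneg (t := ε ^ 2 / 2) (by positivity)
    have ht : 0 < ε ^ 2 / 2 * (1 + ε ^ 2 / 2) := by positivity
    nlinarith
  · have hcycle : (Pt * ω * Pt * P').trace = (Pt * P' * Pt * ω).trace := by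
      rw [mul_assoc, trace_mul_comm, ← mul_assoc]
    have hmono := Complex.le_def.mp (trace_mul_le_trace_mul h2 hP'0.nonneg)
    rw [hcycle, smul_mul_assoc, trace_smul, trace_mul_comm τ] at hmono
    simpa using hmono.1

/-- Composition of a projection with a hypothesis test: if `Tr(Π̃ κ) ≥ 1 − ε⁴/4`,
`Π̃ ω Π̃ ≼ 2τ` and `Tr(Π' κ) ≥ 1 − ε⁴/4`, then `Π := Π̃ Π' Π̃` is a measurement operator
with `Tr(Π κ) ≥ 1 − ε²` and `Tr(Π ω) ≤ 2 · Tr(Π' τ)`. -/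
theorem projection_compose_hypothesis_test {n : Type*} [Fintype n] [DecidableEq n]
    (ε : ℝ) (hε0 : 0 < ε) (hε1 : ε ≤ 1)
    (κ τ ω Pt P' : Matrix n n ℂ)
    (hκ : IsDensityMatrix κ) (hτ : τ.PosSemidef) (hω : ω.PosSemidef)
    (hPt : Pt.IsHermitian) (hPtproj : Pt * Pt = Pt)
    (hP'0 : P'.PosSemidef) (hP'1 : ((1 : Matrix n n ℂ) - P').PosSemidef)
    (h1 : 1 - ε ^ 4 / 4 ≤ ((Pt * κ).trace).re)
    (h2 : ((2 : ℂ) • τ - Pt * ω * Pt).PosSemidef)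
    (h3 : 1 - ε ^ 4 / 4 ≤ ((P' * κ).trace).re) :
    (Pt * P' * Pt).PosSemidef ∧
    ((1 : Matrix n n ℂ) - Pt * P' * Pt).PosSemidef ∧
    1 - ε ^ 2 ≤ (((Pt * P' * Pt) * κ).trace).re ∧
    (((Pt * P' * Pt) * ω).trace).re ≤ 2 * ((P' * τ).trace).re :=
  projection_compose_hypothesis_test_general ε hε0 κ τ ω Pt P' hκ hPt hPtproj hP'0 hP'1 h1 h2 h3
end

section
/- Block-decomposed states are quantum Markov states: Let r, u, j, v, c be finite types (registers R, B^R, J, B^C, C), let p be a probability distribution on j, and for each j let α_j be a density matrix on r × u and β_j a density matrix on v × c. Let σ be the density matrix on R ⊗ B ⊗ C, where B = B^R ⊗ J ⊗ B^C (index type r × (u × j × v) × c), given by σ = ∑_j p(j) · α_j ⊗ |j⟩⟨j| ⊗ β_j, i.e., σ((x,(u₁,j₁,v₁),y),(x',(u₂,j₂,v₂),y')) equals p(j₁)·α_{j₁}((x,u₁),(x',u₂))·β_{j₁}((v₁,y),(v₂,y')) if j₁ = j₂ and 0 otherwise. Then S(σ^{RB}) + S(σ^{BC}) = S(σ^{RBC})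 + S(σ^{B}); equivalently, the quantum conditional mutual information I(R:C|B)_σ = 0. -/
open Matrix Kronecker
open scoped ComplexOrder Classical

/-- Matrix logarithm of a Hermitian matrix, obtained by applying the natural logarithm to
each eigenvalue in a spectral decomposition (with the convention `log 0 = 0`, as in
`Real.log`).  Junk value `0` on non-Hermitian matrices. -/
noncomputable def matLog {n : Type*} [Fintype n] [DecidableEq n] (A : Matrix n n ℂ) :
    Matrix n n ℂ :=
  if hA : A.IsHermitian then
    (hA.eigenvectorUnitary : Matrix n n ℂ) *
      Matrix.diagonal (fun i => ((Real.log (hA.eigenvalues i) : ℝ) : ℂ)) *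
      (star hA.eigenvectorUnitary : Matrix n n ℂ)
  else 0

/-- Von Neumann entropy `S(ρ) = −Tr(ρ log ρ)`. -/
noncomputable def vnEntropy {n : Type*} [Fintype n] [DecidableEq n] (ρ : Matrix n n ℂ) : ℝ :=
  -(((ρ * matLog ρ).trace).re)

/-- Quantum relative entropy `D(ρ‖σ) = Tr(ρ (log ρ − log σ))`. -/
noncomputable def relEntropy {n : Type*} [Fintype n] [DecidableEq n]
    (ρ σ : Matrix n n ℂ) : ℝ :=
  ((ρ * (matLog ρ - matLog σ)).trace).re

/-- Marginal on `R ⊗ B` of a tripartite state on `R ⊗ B ⊗ C`. -/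
noncomputable def margRB {r b c : Type*} [Fintype c]
    (ψ : Matrix (r × b × c) (r × b × c) ℂ) : Matrix (r × b) (r × b) ℂ :=
  Matrix.of fun p q => ∑ z : c, ψ (p.1, p.2, z) (q.1, q.2, z)

/-- Marginal on `B ⊗ C` of a tripartite state on `R ⊗ B ⊗ C`. -/
noncomputable def margBC {r b c : Type*} [Fintype r]
    (ψ : Matrix (r × b × c) (r × b × c) ℂ) : Matrix (b × c) (b × c) ℂ :=
  Matrix.of fun p q => ∑ x : r, ψ (x, p.1, p.2) (x, q.1, q.2)

/-- Marginal on `B` of a tripartite state on `R ⊗ B ⊗ C`. -/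
noncomputable def margB {r b c : Type*} [Fintype r] [Fintype c]
    (ψ : Matrix (r × b × c) (r × b × c) ℂ) : Matrix b b ℂ :=
  Matrix.of fun y y' => ∑ x : r, ∑ z : c, ψ (x, y, z) (x, y', z)

/-- Quantum conditional mutual information
`I(R:C|B)_ψ = S(ψ^{RB}) + S(ψ^{BC}) − S(ψ^{RBC}) − S(ψ^{B})`. -/
noncomputable def condMutualInfo {r b c : Type*}
    [Fintype r] [DecidableEq r] [Fintype b] [DecidableEq b] [Fintype c] [DecidableEq c]
    (ψ : Matrix (r × b × c) (r × b × c) ℂ) : ℝ :=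
  vnEntropy (margRB ψ) + vnEntropy (margBC ψ) - vnEntropy ψ - vnEntropy (margB ψ)


/-!
After a relabelling of its index set, each of `σ`, `σ^{RB}`, `σ^{BC}`, `σ^B` is block diagonal
with blocks `p(j) • X_j ⊗ Y_j`, where `(X_j, Y_j)` is `(α_j, β_j)`, `(α_j, Tr_C β_j)`,
`(Tr_R α_j, β_j)` or `(Tr_R α_j, Tr_C β_j)`. Diagonalizing blockwise, the entropy of such a
matrix is `∑_j (η(p_j) + p_j (S(X_j) + S(Y_j)))` with `η(x) = -x log x`, because `η` turns
products into the Leibniz-type sums `η(xy) = y η(x) + x η(y)` and the `X_j`, `Y_j` have trace 1.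
Both sides of the identity then equal
`∑_j (2 η(p_j) + p_j (S(α_j) + S(β_j) + S(Tr_R α_j) + S(Tr_C β_j)))`.
-/

open Polynomial Real

namespace Matrix

section Spectral

variable {n : Type*} [Fintype n] [DecidableEq n]

lemma IsHermitian.eq_eigenvectorUnitary_mul_diagonal {A : Matrix n n ℂ} (hA : A.IsHermitian) :
    A = (hA.eigenvectorUnitary : Matrix n n ℂ) * diagonal (fun i => (hA.eigenvalues i : ℂ)) *
      star (hA.eigenvectorUnitary : Matrix n n ℂ) :=
  hA.spectral_theorem

lemma IsHermitian.re_trace_eq_sum_eigenvalues {A : Matrix n n ℂ} (hA : A.IsHermitian) :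
    A.trace.re = ∑ i, hA.eigenvalues i := by
  simp [hA.trace_eq_sum_eigenvalues]

lemma IsHermitian.sum_comp_eigenvalues_eq_of_charpoly {A : Matrix n n ℂ} (hA : A.IsHermitian)
    {ι : Type*} [Fintype ι] {d : ι → ℝ} (hd : A.charpoly = ∏ i, (X - C (d i : ℂ)))
    {M : Type*} [AddCommMonoid M] (f : ℝ → M) :
    ∑ i, f (hA.eigenvalues i) = ∑ i, f (d i) := by
  have hroots := hA.roots_charpoly_eq_eigenvalues
  rw [hd, roots_prod _ _ (Finset.prod_ne_zero_iff.mpr fun i _ => X_sub_C_ne_zero _)] at hroots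
  simp only [roots_X_sub_C] at hroots
  have := congrArg (fun s => (s.map (f ∘ Complex.re)).sum) hroots
  simpa [Multiset.map_map, Function.comp_def] using this.symm

lemma trace_unitary_mul_mul_star {U : Matrix n n ℂ} (hU : U ∈ unitaryGroup n ℂ)
    (D : Matrix n n ℂ) : (U * D * star U).trace = D.trace := by
  rw [trace_mul_cycle, mem_unitaryGroup_iff'.mp hU, one_mul]

end Spectral

lemma IsHermitian.kronecker {l m R : Type*} [CommRing R] [StarRing R]
    {A : Matrix l l R} {B : Matrix m m R} (hA : A.IsHermitian) (hB : B.IsHermitian) :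
    (A ⊗ₖ B).IsHermitian := by
  rw [IsHermitian, conjTranspose_kronecker, hA.eq, hB.eq]

section PartialTrace

variable {a b R : Type*} [AddCommMonoid R]

def partialTraceLeft [Fintype a] (M : Matrix (a × b) (a × b) R) : Matrix b b R :=
  of fun y y' => ∑ x, M (x, y) (x, y')

def partialTraceRight [Fintype b] (M : Matrix (a × b) (a × b) R) : Matrix a a R :=
  of fun x x' => ∑ y, M (x, y) (x', y)

lemma trace_partialTraceLeft [Fintype a] [Fintype b] (M : Matrix (a × b) (a × b) R) :
    (partialTraceLeft M).trace = M.trace := by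
  rw [trace, trace, Fintype.sum_prod_type, Finset.sum_comm]
  rfl

lemma trace_partialTraceRight [Fintype a] [Fintype b] (M : Matrix (a × b) (a × b) R) :
    (partialTraceRight M).trace = M.trace := by
  rw [trace, trace, Fintype.sum_prod_type]
  rfl

lemma IsHermitian.partialTraceLeft [Fintype a] [StarAddMonoid R]
    {M : Matrix (a × b) (a × b) R} (hM : M.IsHermitian) : (partialTraceLeft M).IsHermitian := by
  ext y y'
  simp only [conjTranspose_apply, Matrix.partialTraceLeft, of_apply, star_sum]
  exact Finset.sum_congr rfl fun x _ => hM.apply (x, y) (x, y')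

lemma IsHermitian.partialTraceRight [Fintype b] [StarAddMonoid R]
    {M : Matrix (a × b) (a × b) R} (hM : M.IsHermitian) : (partialTraceRight M).IsHermitian := by
  ext x x'
  simp only [conjTranspose_apply, Matrix.partialTraceRight, of_apply, star_sum]
  exact Finset.sum_congr rfl fun y _ => hM.apply (x, y) (x', y)

end PartialTrace

end Matrix

open Matrix

section Entropy

variable {n : Type*} [Fintype n] [DecidableEq n]

lemma vnEntropy_eq_sum_negMulLog_eigenvalues {A : Matrix n n ℂ} (hA : A.IsHermitian) :
    vnEntropy A = ∑ i, negMulLog (hA.eigenvalues i) := by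
  set U : Matrix n n ℂ := ↑hA.eigenvectorUnitary
  have hU : star U * U = 1 := mem_unitaryGroup_iff'.mp hA.eigenvectorUnitary.2
  have hprod : A * matLog A =
      U * diagonal (fun i => ((hA.eigenvalues i * log (hA.eigenvalues i) : ℝ) : ℂ)) * star U := by
    rw [matLog, dif_pos hA]
    nth_rw 1 [hA.eq_eigenvectorUnitary_mul_diagonal]
    simp only [mul_assoc]
    rw [← mul_assoc (star U), hU, one_mul, ← mul_assoc (diagonal _), diagonal_mul_diagonal]
    push_cast
    rfl
  rw [vnEntropy, hprod, trace_unitary_mul_mul_star hA.eigenvectorUnitary.2, trace_diagonal,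
    ← Complex.ofReal_sum, Complex.ofReal_re, ← Finset.sum_neg_distrib]
  simp only [negMulLog, neg_mul]

lemma vnEntropy_unitary_mul_diagonal_mul_star {U : Matrix n n ℂ} (hU : U ∈ unitaryGroup n ℂ)
    (d : n → ℝ) :
    vnEntropy (U * diagonal (fun i => (d i : ℂ)) * star U) = ∑ i, negMulLog (d i) := by
  have hH : (U * diagonal (fun i => (d i : ℂ)) * star U).IsHermitian :=
    isHermitian_mul_mul_conjTranspose U
      (isHermitian_diagonal_iff.mpr fun i => Complex.conj_ofReal _)
  have hcharpoly :
      (U * diagonal (fun i => (d i : ℂ)) * star U).charpoly = ∏ i, (X - C (d i : ℂ)) := by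
    rw [charpoly_mul_comm, ← mul_assoc, mem_unitaryGroup_iff'.mp hU, one_mul, charpoly_diagonal]
  rw [vnEntropy_eq_sum_negMulLog_eigenvalues hH, hH.sum_comp_eigenvalues_eq_of_charpoly hcharpoly]

lemma vnEntropy_submatrix_equiv {m : Type*} [Fintype m] [DecidableEq m] {A : Matrix n n ℂ}
    (hA : A.IsHermitian) (e : m ≃ n) : vnEntropy (A.submatrix e e) = vnEntropy A := by
  have hH : (A.submatrix e e).IsHermitian := hA.submatrix e
  have hcharpoly : (A.submatrix e e).charpoly = ∏ i, (X - C (hA.eigenvalues i : ℂ)) :=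
    (charpoly_reindex e.symm A).trans hA.charpoly_eq
  rw [vnEntropy_eq_sum_negMulLog_eigenvalues hH, hH.sum_comp_eigenvalues_eq_of_charpoly hcharpoly,
    vnEntropy_eq_sum_negMulLog_eigenvalues hA]

lemma vnEntropy_smul {A : Matrix n n ℂ} (hA : A.IsHermitian) (c : ℝ) :
    vnEntropy ((c : ℂ) • A) = c * vnEntropy A + A.trace.re * negMulLog c := by
  set U : Matrix n n ℂ := ↑hA.eigenvectorUnitary
  have hsmul : (c : ℂ) • A =
      U * diagonal (fun i => ((c * hA.eigenvalues i : ℝ) : ℂ)) * star U := by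
    conv_lhs => rw [hA.eq_eigenvectorUnitary_mul_diagonal]
    rw [← smul_mul_assoc, ← mul_smul_comm, ← diagonal_smul]
    push_cast
    rfl
  rw [hsmul, vnEntropy_unitary_mul_diagonal_mul_star hA.eigenvectorUnitary.2,
    vnEntropy_eq_sum_negMulLog_eigenvalues hA, hA.re_trace_eq_sum_eigenvalues, Finset.mul_sum,
    Finset.sum_mul, ← Finset.sum_add_distrib]
  simp only [negMulLog_mul]
  exact Finset.sum_congr rfl fun i _ => by ring

lemma vnEntropy_kronecker {m : Type*} [Fintype m] [DecidableEq m] {A : Matrix n n ℂ}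
    {B : Matrix m m ℂ} (hA : A.IsHermitian) (hB : B.IsHermitian) :
    vnEntropy (A ⊗ₖ B) = B.trace.re * vnEntropy A + A.trace.re * vnEntropy B := by
  set U : Matrix n n ℂ := ↑hA.eigenvectorUnitary
  set V : Matrix m m ℂ := ↑hB.eigenvectorUnitary
  have hUV : U ⊗ₖ V ∈ unitaryGroup (n × m) ℂ :=
    kronecker_mem_unitary hA.eigenvectorUnitary.2 hB.eigenvectorUnitary.2
  have hkron : A ⊗ₖ B = (U ⊗ₖ V) *
      diagonal (fun i => ((hA.eigenvalues i.1 * hB.eigenvalues i.2 : ℝ) : ℂ)) *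
        star (U ⊗ₖ V) := by
    conv_lhs => rw [hA.eq_eigenvectorUnitary_mul_diagonal, hB.eq_eigenvectorUnitary_mul_diagonal]
    rw [mul_kronecker_mul, mul_kronecker_mul, diagonal_kronecker_diagonal, star_eq_conjTranspose,
      star_eq_conjTranspose, star_eq_conjTranspose, conjTranspose_kronecker]
    push_cast
    rfl
  rw [hkron, vnEntropy_unitary_mul_diagonal_mul_star hUV,
    vnEntropy_eq_sum_negMulLog_eigenvalues hA, vnEntropy_eq_sum_negMulLog_eigenvalues hB,
    hA.re_trace_eq_sum_eigenvalues, hB.re_trace_eq_sum_eigenvalues, Finset.sum_mul_sum,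
    Finset.sum_mul_sum, Finset.sum_comm (s := Finset.univ (α := m)), Fintype.sum_prod_type,
    ← Finset.sum_add_distrib]
  refine Finset.sum_congr rfl fun i _ => ?_
  rw [← Finset.sum_add_distrib]
  simp only [negMulLog_mul]

lemma vnEntropy_blockDiagonal {ι : Type*} [Fintype ι] [DecidableEq ι] {M : ι → Matrix n n ℂ}
    (hM : ∀ k, (M k).IsHermitian) : vnEntropy (blockDiagonal M) = ∑ k, vnEntropy (M k) := by
  set U : ι → Matrix n n ℂ := fun k => ↑(hM k).eigenvectorUnitary
  have hU : blockDiagonal U ∈ unitaryGroup (n × ι) ℂ := by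
    rw [mem_unitaryGroup_iff, star_eq_conjTranspose, blockDiagonal_conjTranspose,
      ← blockDiagonal_mul]
    convert blockDiagonal_one
    exact mem_unitaryGroup_iff.mp (hM _).eigenvectorUnitary.2
  have hblock : blockDiagonal M = blockDiagonal U *
      blockDiagonal (fun k => diagonal (fun i => ((hM k).eigenvalues i : ℂ))) *
        star (blockDiagonal U) := by
    rw [star_eq_conjTranspose, blockDiagonal_conjTranspose, ← blockDiagonal_mul,
      ← blockDiagonal_mul]
    exact congrArg blockDiagonal (funext fun k => (hM k).eq_eigenvectorUnitary_mul_diagonal)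
  rw [hblock, blockDiagonal_diagonal, vnEntropy_unitary_mul_diagonal_mul_star hU,
    Fintype.sum_prod_type, Finset.sum_comm]
  exact Finset.sum_congr rfl fun k _ => (vnEntropy_eq_sum_negMulLog_eigenvalues (hM k)).symm

end Entropy

section BlockState

variable {ι m n : Type*}

def blockState [DecidableEq ι] (p : ι → ℝ) (A : ι → Matrix m m ℂ) (B : ι → Matrix n n ℂ) :
    Matrix ((m × n) × ι) ((m × n) × ι) ℂ :=
  blockDiagonal fun k => (p k : ℂ) • (A k ⊗ₖ B k)

lemma vnEntropy_submatrix_blockState [Fintype ι] [DecidableEq ι] [Fintype m] [DecidableEq m]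
    [Fintype n] [DecidableEq n] {m' : Type*} [Fintype m'] [DecidableEq m']
    (e : m' ≃ (m × n) × ι) (p : ι → ℝ) {A : ι → Matrix m m ℂ} {B : ι → Matrix n n ℂ}
    (hA : ∀ k, (A k).IsHermitian) (hA1 : ∀ k, (A k).trace = 1)
    (hB : ∀ k, (B k).IsHermitian) (hB1 : ∀ k, (B k).trace = 1) :
    vnEntropy ((blockState p A B).submatrix e e) =
      ∑ k, (negMulLog (p k) + p k * (vnEntropy (A k) + vnEntropy (B k))) := by
  have hblocks k : ((p k : ℂ) • (A k ⊗ₖ B k)).IsHermitian :=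
    ((hA k).kronecker (hB k)).smul (Complex.conj_ofReal _)
  rw [blockState, vnEntropy_submatrix_equiv (isHermitian_blockDiagonal_iff.mpr hblocks),
    vnEntropy_blockDiagonal hblocks]
  refine Finset.sum_congr rfl fun k _ => ?_
  rw [vnEntropy_smul ((hA k).kronecker (hB k)), vnEntropy_kronecker (hA k) (hB k),
    trace_kronecker, hA1, hB1]
  simp only [Complex.one_re, one_mul, mul_one]
  ring

end BlockState

section BlockDecomposed

variable {r u j v c : Type*}

def tripartiteBlockEquiv : r × (u × j × v) × c ≃ ((r × u) × (v × c)) × j where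
  toFun x := (((x.1, x.2.1.1), (x.2.1.2.2, x.2.2)), x.2.1.2.1)
  invFun y := (y.1.1.1, (y.1.1.2, y.2, y.1.2.1), y.1.2.2)

def rbBlockEquiv : r × (u × j × v) ≃ ((r × u) × v) × j where
  toFun x := (((x.1, x.2.1), x.2.2.2), x.2.2.1)
  invFun y := (y.1.1.1, (y.1.1.2, y.2, y.1.2))

def bcBlockEquiv : (u × j × v) × c ≃ (u × (v × c)) × j where
  toFun x := ((x.1.1, (x.1.2.2, x.2)), x.1.2.1)
  invFun y := ((y.1.1, y.2, y.1.2.1), y.1.2.2)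

def bBlockEquiv : u × j × v ≃ (u × v) × j where
  toFun x := ((x.1, x.2.2), x.2.1)
  invFun y := (y.1.1, y.2, y.1.2)

variable [DecidableEq j] (p : j → ℝ) (α : j → Matrix (r × u) (r × u) ℂ)
  (β : j → Matrix (v × c) (v × c) ℂ)

lemma margRB_blockState [Fintype c] :
    margRB ((blockState p α β).submatrix tripartiteBlockEquiv tripartiteBlockEquiv) =
      (blockState p α fun k => (β k).partialTraceRight).submatrix rbBlockEquiv rbBlockEquiv := by
  ext ⟨x, u, k, v⟩ ⟨x', u', k', v'⟩
  simp [margRB, blockState, blockDiagonal_apply, partialTraceRight, tripartiteBlockEquiv,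
    rbBlockEquiv, Finset.mul_sum]

lemma margBC_blockState [Fintype r] :
    margBC ((blockState p α β).submatrix tripartiteBlockEquiv tripartiteBlockEquiv) =
      (blockState p (fun k => (α k).partialTraceLeft) β).submatrix bcBlockEquiv bcBlockEquiv := by
  ext ⟨⟨u, k, v⟩, z⟩ ⟨⟨u', k', v'⟩, z'⟩
  simp [margBC, blockState, blockDiagonal_apply, partialTraceLeft, tripartiteBlockEquiv,
    bcBlockEquiv, Finset.mul_sum, Finset.sum_mul]

lemma margB_blockState [Fintype r] [Fintype c] :
    margB ((blockState p α β).submatrix tripartiteBlockEquiv tripartiteBlockEquiv) =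
      (blockState p (fun k => (α k).partialTraceLeft)
        fun k => (β k).partialTraceRight).submatrix bBlockEquiv bBlockEquiv := by
  ext ⟨u, k, v⟩ ⟨u', k', v'⟩
  simp [margB, blockState, blockDiagonal_apply, partialTraceLeft, partialTraceRight,
    tripartiteBlockEquiv, bBlockEquiv, Finset.mul_sum, Finset.sum_mul]
  congr 1
  exact Finset.sum_comm

end BlockDecomposed

theorem block_decomposed_isMarkov_general {r u j v c : Type*}
    [Fintype r] [DecidableEq r] [Fintype u] [DecidableEq u] [Fintype j] [DecidableEq j]
    [Fintype v] [DecidableEq v] [Fintype c] [DecidableEq c]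
    (p : j → ℝ)
    (α : j → Matrix (r × u) (r × u) ℂ) (hα : ∀ x, IsDensityMatrix (α x))
    (β : j → Matrix (v × c) (v × c) ℂ) (hβ : ∀ x, IsDensityMatrix (β x))
    (σ : Matrix (r × (u × j × v) × c) (r × (u × j × v) × c) ℂ)
    (hσ : ∀ x y : r × (u × j × v) × c,
      σ x y = if x.2.1.2.1 = y.2.1.2.1 then
          (p x.2.1.2.1 : ℂ) * α x.2.1.2.1 (x.1, x.2.1.1) (y.1, y.2.1.1)
            * β x.2.1.2.1 (x.2.1.2.2, x.2.2) (y.2.1.2.2, y.2.2)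
        else 0) :
    vnEntropy (margRB σ) + vnEntropy (margBC σ) = vnEntropy σ + vnEntropy (margB σ) := by
  obtain rfl : σ = (blockState p α β).submatrix tripartiteBlockEquiv tripartiteBlockEquiv := by
    ext x y
    simp [hσ, blockState, blockDiagonal_apply, tripartiteBlockEquiv, mul_assoc]
  have hαH k := (hα k).1.1
  have hβH k := (hβ k).1.1
  have hα1 k := (hα k).2
  have hβ1 k := (hβ k).2
  have hα'H k := (hαH k).partialTraceLeft
  have hβ'H k := (hβH k).partialTraceRight
  have hα'1 k := (trace_partialTraceLeft (α k)).trans (hα1 k)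
  have hβ'1 k := (trace_partialTraceRight (β k)).trans (hβ1 k)
  rw [margRB_blockState, margBC_blockState, margB_blockState,
    vnEntropy_submatrix_blockState _ _ hαH hα1 hβ'H hβ'1,
    vnEntropy_submatrix_blockState _ _ hα'H hα'1 hβH hβ1,
    vnEntropy_submatrix_blockState _ _ hαH hα1 hβH hβ1,
    vnEntropy_submatrix_blockState _ _ hα'H hα'1 hβ'H hβ'1,
    ← Finset.sum_add_distrib, ← Finset.sum_add_distrib]
  exact Finset.sum_congr rfl fun k _ => by ring

/-- Block-decomposed states `σ = ⨁_j p(j) · α_j^{R B^R} ⊗ |j⟩⟨j| ⊗ β_j^{B^C C}` are quantum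
Markov states: `S(σ^{RB}) + S(σ^{BC}) = S(σ^{RBC}) + S(σ^B)`, i.e. `I(R:C|B)_σ = 0`. -/
theorem block_decomposed_isMarkov {r u j v c : Type*}
    [Fintype r] [DecidableEq r] [Fintype u] [DecidableEq u] [Fintype j] [DecidableEq j]
    [Fintype v] [DecidableEq v] [Fintype c] [DecidableEq c]
    (p : j → ℝ) (hp0 : ∀ x, 0 ≤ p x) (hp1 : ∑ x, p x = 1)
    (α : j → Matrix (r × u) (r × u) ℂ) (hα : ∀ x, IsDensityMatrix (α x))
    (β : j → Matrix (v × c) (v × c) ℂ) (hβ : ∀ x, IsDensityMatrix (β x))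
    (σ : Matrix (r × (u × j × v) × c) (r × (u × j × v) × c) ℂ)
    (hσ : ∀ x y : r × (u × j × v) × c,
      σ x y = if x.2.1.2.1 = y.2.1.2.1 then
          (p x.2.1.2.1 : ℂ) * α x.2.1.2.1 (x.1, x.2.1.1) (y.1, y.2.1.1)
            * β x.2.1.2.1 (x.2.1.2.2, x.2.2) (y.2.1.2.2, y.2.2)
        else 0) :
    vnEntropy (margRB σ) + vnEntropy (margBC σ) = vnEntropy σ + vnEntropy (margB σ) :=
  block_decomposed_isMarkov_general p α hα β hβ σ hσ
end

section
/- Logarithm of a scaled Kronecker product: Let A be a positive definite Hermitian m × m complex matrix, B a positive definite Hermitian k × k complex matrix, and p > 0 a real number. Then log(p · (A ⊗ B)) = (ln p) · 1_{mk} + (log A) ⊗ 1_k + 1_m ⊗ (log B), where A ⊗ B denotes the Kronecker product, 1 denotes identity matrices of the indicated sizes, and ln is the natural logarithm. -/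
open Matrix Kronecker
open scoped ComplexOrder Classical

/-!
Diagonalise `A = U diag(a) U*` and `B = V diag(b) V*`. Then `U ⊗ V` is unitary and
`p • (A ⊗ B) = (U ⊗ V) diag(p a_i b_j) (U ⊗ V)*`, so the matrix logarithm takes the entrywise
logarithm `log p + log a_i + log b_j` of this diagonal, which splits into the three terms.
The only subtle point is that `matLog` is defined through one particular eigendecomposition; it
agrees with any other unitary diagonalisation because on both it is evaluation of one and the
same interpolation polynomial of `log`.
-/

open Polynomial Unitary

section Kronecker

variable {R l n : Type*} [CommSemiring R] [StarRing R] [Fintype l] [DecidableEq l]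
  [Fintype n] [DecidableEq n]

def kroneckerUnitary (U : unitary (Matrix l l R)) (V : unitary (Matrix n n R)) :
    unitary (Matrix (l × n) (l × n) R) :=
  ⟨U ⊗ₖ V, by
    rw [Unitary.mem_iff, star_eq_conjTranspose, conjTranspose_kronecker, ← mul_kronecker_mul,
      ← mul_kronecker_mul, ← star_eq_conjTranspose, ← star_eq_conjTranspose]
    simp⟩

lemma conjStarAlgAut_kronecker (U : unitary (Matrix l l R)) (V : unitary (Matrix n n R))
    (X : Matrix l l R) (Y : Matrix n n R) :
    conjStarAlgAut R (Matrix (l × n) (l × n) R) (kroneckerUnitary U V) (X ⊗ₖ Y)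
      = conjStarAlgAut R _ U X ⊗ₖ conjStarAlgAut R _ V Y := by
  simp [kroneckerUnitary, star_eq_conjTranspose, conjTranspose_kronecker, mul_kronecker_mul]

end Kronecker

section Log

variable {n : Type*} [Fintype n] [DecidableEq n]

lemma matLog_eq_conjStarAlgAut {A : Matrix n n ℂ} (hA : A.IsHermitian) :
    matLog A = conjStarAlgAut ℂ _ hA.eigenvectorUnitary
      (diagonal fun i => ((Real.log (hA.eigenvalues i) : ℝ) : ℂ)) := by
  rw [matLog, dif_pos hA, conjStarAlgAut_apply]

lemma aeval_diagonal_ofReal (d : n → ℝ) (q : ℝ[X]) :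
    aeval (diagonal fun i => (d i : ℂ)) q = diagonal fun i => ((q.eval (d i) : ℝ) : ℂ) := by
  rw [← diagonalAlgHom_apply (R := ℝ), aeval_algHom_apply]
  refine congrArg diagonal (funext fun i => ?_)
  change Pi.evalAlgHom ℝ (fun _ : n => ℂ) i (aeval _ q) = _
  rw [← aeval_algHom_apply]
  exact aeval_algebraMap_apply ℂ (d i) q

lemma aeval_conjStarAlgAut (U : unitary (Matrix n n ℂ)) (X : Matrix n n ℂ) (q : ℝ[X]) :
    aeval (conjStarAlgAut ℂ _ U X) q = conjStarAlgAut ℂ _ U (aeval X q) :=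
  aeval_algHom_apply ((conjStarAlgAut ℂ _ U).toAlgEquiv.restrictScalars ℝ) X q

lemma matLog_conjStarAlgAut_diagonal (U : unitary (Matrix n n ℂ)) (d : n → ℝ) :
    matLog (conjStarAlgAut ℂ _ U (diagonal fun i => (d i : ℂ)))
      = conjStarAlgAut ℂ _ U (diagonal fun i => ((Real.log (d i) : ℝ) : ℂ)) := by
  set X := conjStarAlgAut ℂ _ U (diagonal fun i => (d i : ℂ))
  have hX : X.IsHermitian :=
    IsSelfAdjoint.map (isHermitian_diagonal_iff.mpr fun i => Complex.conj_ofReal (d i)) _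
  set s := Finset.univ.image hX.eigenvalues ∪ Finset.univ.image d
  set q := Lagrange.interpolate s id Real.log
  have aeval_eq (V : unitary (Matrix n n ℂ)) (e : n → ℝ) (he : ∀ i, e i ∈ s)
      (hXV : X = conjStarAlgAut ℂ _ V (diagonal fun i => (e i : ℂ))) :
      aeval X q = conjStarAlgAut ℂ _ V (diagonal fun i => ((Real.log (e i) : ℝ) : ℂ)) := by
    rw [hXV, aeval_conjStarAlgAut, aeval_diagonal_ofReal]
    congr! 3 with i
    exact congrArg _ (Lagrange.eval_interpolate_at_node Real.log (Set.injOn_id _) (he i))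
  rw [← aeval_eq U d (by simp [s]) rfl, aeval_eq _ _ (by simp [s]) hX.spectral_theorem,
    matLog_eq_conjStarAlgAut hX]
  rfl

end Log

/-- Logarithm of a scaled Kronecker product of positive definite Hermitian matrices:
`log(p · (A ⊗ B)) = (ln p) · 1 + (log A) ⊗ 1 + 1 ⊗ (log B)`. -/
theorem matLog_smul_kronecker {m k : ℕ}
    (A : Matrix (Fin m) (Fin m) ℂ) (B : Matrix (Fin k) (Fin k) ℂ)
    (hA : A.PosDef) (hB : B.PosDef) (p : ℝ) (hp : 0 < p) :
    matLog (((p : ℝ) : ℂ) • (A ⊗ₖ B)) =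
      ((Real.log p : ℝ) : ℂ) • (1 : Matrix (Fin m × Fin k) (Fin m × Fin k) ℂ)
        + (matLog A) ⊗ₖ (1 : Matrix (Fin k) (Fin k) ℂ)
        + (1 : Matrix (Fin m) (Fin m) ℂ) ⊗ₖ (matLog B) := by
  set a := hA.isHermitian.eigenvalues
  set b := hB.isHermitian.eigenvalues
  set U := kroneckerUnitary hA.isHermitian.eigenvectorUnitary hB.isHermitian.eigenvectorUnitary
  have spectral : ((p : ℝ) : ℂ) • (A ⊗ₖ B) = conjStarAlgAut ℂ _ U
      (diagonal fun ij => ((p * (a ij.1 * b ij.2) : ℝ) : ℂ)) := by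
    conv_lhs => rw [hA.isHermitian.spectral_theorem, hB.isHermitian.spectral_theorem]
    rw [← conjStarAlgAut_kronecker, ← map_smul, diagonal_kronecker_diagonal, ← diagonal_smul]
    refine congrArg _ (congrArg diagonal (funext fun ij => ?_))
    simp [a, b]
  have log_split : (diagonal fun ij => ((Real.log (p * (a ij.1 * b ij.2)) : ℝ) : ℂ))
      = ((Real.log p : ℝ) : ℂ) • 1 + (diagonal fun i => ((Real.log (a i) : ℝ) : ℂ)) ⊗ₖ 1
        + 1 ⊗ₖ (diagonal fun j => ((Real.log (b j) : ℝ) : ℂ)) := by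
    rw [smul_one_eq_diagonal, ← diagonal_one, ← diagonal_one, diagonal_kronecker_diagonal,
      diagonal_kronecker_diagonal, diagonal_add, diagonal_add]
    congr 1
    funext ij
    have ha := hA.eigenvalues_pos ij.1
    have hb := hB.eigenvalues_pos ij.2
    rw [Real.log_mul hp.ne' (by positivity), Real.log_mul ha.ne' hb.ne']
    simp [a, b, add_assoc]
  rw [spectral, matLog_conjStarAlgAut_diagonal, log_split, map_add, map_add, map_smul, map_one,
    conjStarAlgAut_kronecker, conjStarAlgAut_kronecker, map_one, map_one,
    matLog_eq_conjStarAlgAut, matLog_eq_conjStarAlgAut]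
end
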